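/- Let (G,H) be a Hecke pair with H protonormal in G. Then the map x ↦ σ_x from G to the Hecke algebra H(G,H) is a partial representation: σ_1 = 1, σ_{x⁻¹}σ_xσ_y = σ_{x⁻¹}σ_{xy}, and σ_xσ_yσ_{y⁻¹} = σ_{xy}σ_{y⁻¹} for all x, y ∈ G. -/

import Mathlib

open scoped Pointwise Classical


/-- The free `F`-vector space on the right coset space `H\G`. -/
abbrev HeckeModule {G : Type*} [Group G] (H : Subgroup G) (F : Type*) [Field F] :=
  Quotient (QuotientGroup.rightRel H) →₀ F

/-- The basis vector `δ_{Ht}` of `F(H\G)`. -/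
noncomputable def deltaH {G : Type*} [Group G] (H : Subgroup G) (F : Type*) [Field F]
    (t : G) : HeckeModule H F :=
  Finsupp.single (Quotient.mk (QuotientGroup.rightRel H) t) 1

/-- `T` is the Hecke operator `σ_x`: there is a (finite) family of representatives `S`
for the right coset space `(H ∩ x⁻¹Hx)\H` such that
`T(δ_{Ht}) = |S|⁻¹ • Σ_{h ∈ S} δ_{Hxht}` for all `t ∈ G`. -/
def IsSigma {G : Type*} [Group G] (H : Subgroup G) (F : Type*) [Field F] (x : G)
    (T : Module.End F (HeckeModule H F)) : Prop :=
  ∃ S : Finset G, (↑S : Set G) ⊆ (H : Set G) ∧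
    (∀ g ∈ H, ∃! s, s ∈ S ∧ g * s⁻¹ ∈ H ∧ x * (g * s⁻¹) * x⁻¹ ∈ H) ∧
    ∀ t : G, T (deltaH H F t) = (S.card : F)⁻¹ • ∑ h ∈ S, deltaH H F (x * h * t)

/-- `(G, H)` is a Hecke pair: `[H : H ∩ x⁻¹Hx] < ∞` for all `x ∈ G`. -/
def IsHeckePair {G : Type*} [Group G] (H : Subgroup G) : Prop :=
  ∀ x : G, (H ⊓ H.comap (MulAut.conj x).toMonoidHom).relIndex H ≠ 0

/-!
In the basis `δ_{Hw}`, `σ_x` has matrix entries `[H : H ∩ x⁻¹Hx]⁻¹ · 1_{HxH}(w t⁻¹)`.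
Protonormality makes `L_x = H · x⁻¹Hx` a subgroup, and `σ_{x⁻¹} σ_x` is the averaging operator
with entries `[H : H ∩ xHx⁻¹]⁻¹ · 1_{L_x}(w t⁻¹)`. Both sides of `σ_{x⁻¹} σ_x σ_y = σ_{x⁻¹} σ_{xy}`
then measure the proportion of `H` occupied by `{k | w t⁻¹ k⁻¹ y⁻¹ ∈ L_x}`, once in units of right
cosets of `H ∩ y⁻¹Hy` and once of `H ∩ (xy)⁻¹H(xy)`; the two proportions agree because the set is
invariant under both subgroups.

The third identity is the transpose of the second: the matrix of `σ_x` is `Δ(x)` times the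
transpose of that of `σ_{x⁻¹}`, where `Δ` is the modular function of the Hecke pair, and `Δ` is
multiplicative by the cocycle identity for indices of commensurable subgroups.
-/

section Transversals

open Finset

variable {G : Type*} [Group G]

def IsRightTransversal (H K : Subgroup G) (S : Finset G) : Prop :=
  (S : Set G) ⊆ H ∧ ∀ g ∈ H, ∃! s, s ∈ S ∧ g * s⁻¹ ∈ K

lemma rightRel_subgroupOf_iff {H K : Subgroup G} {a b : H} :
    QuotientGroup.rightRel (K.subgroupOf H) a b ↔ (b : G) * (a : G)⁻¹ ∈ K := by
  rw [QuotientGroup.rightRel_apply, Subgroup.mem_subgroupOf, Subgroup.coe_mul,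
    Subgroup.coe_inv]

lemma exists_isRightTransversal {H K : Subgroup G} (hK : K.relIndex H ≠ 0) :
    ∃ S, IsRightTransversal H K S := by
  let Q := Quotient (QuotientGroup.rightRel (K.subgroupOf H))
  have : Finite Q := Nat.finite_of_card_ne_zero (by
    rwa [Nat.card_congr (QuotientGroup.quotientRightRelEquivQuotientLeftRel _)])
  refine ⟨(Set.finite_range fun q : Q => (q.out : G)).toFinset, ?_, fun g hg => ?_⟩
  · intro s hs
    obtain ⟨q, rfl⟩ : ∃ q : Q, (q.out : G) = s := by simpa using hs
    exact q.out.2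
  · refine ⟨_, ⟨by simp, rightRel_subgroupOf_iff.1
      (Quotient.mk_out (s := QuotientGroup.rightRel _) (⟨g, hg⟩ : H))⟩, ?_⟩
    rintro s ⟨hs, hgs⟩
    obtain ⟨q, rfl⟩ : ∃ q : Q, (q.out : G) = s := by simpa using hs
    rw [← Quotient.out_eq q, Quotient.sound (rightRel_subgroupOf_iff (b := ⟨g, hg⟩).2 hgs)]

lemma iff_of_mul_inv_mem {K : Subgroup G} {P : G → Prop}
    (hP : ∀ κ ∈ K, ∀ a, P a → P (κ * a)) {a b : G} (hab : a * b⁻¹ ∈ K) : P a ↔ P b := by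
  refine ⟨fun ha => ?_, fun hb => ?_⟩
  · simpa using hP _ (K.inv_mem hab) a ha
  · simpa using hP _ hab b hb

namespace IsRightTransversal

variable {H K D : Subgroup G} {S T : Finset G}

lemma card_filter_eq_one (hS : IsRightTransversal H K S) {g : G} (hg : g ∈ H) :
    #(S.filter fun s => g * s⁻¹ ∈ K) = 1 := by
  rw [card_eq_one_iff_existsUnique]
  simpa only [mem_filter] using hS.2 g hg

lemma card_eq_relIndex (hS : IsRightTransversal H K S) : #S = K.relIndex H := by
  rw [Subgroup.relIndex, Subgroup.index, ← Nat.card_congr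
    (QuotientGroup.quotientRightRelEquivQuotientLeftRel (K.subgroupOf H)), ← Nat.card_eq_finsetCard]
  refine Nat.card_congr (Equiv.ofBijective (fun s => Quotient.mk (QuotientGroup.rightRel _)
    ⟨s, hS.1 s.2⟩) ⟨fun s s' hss' => ?_, fun q => ?_⟩)
  · replace hss' := rightRel_subgroupOf_iff.1 (Quotient.exact hss')
    exact Subtype.ext ((hS.2 _ (hS.1 s'.2)).unique ⟨s.2, hss'⟩ ⟨s'.2, by simp [K.one_mem]⟩)
  · induction q using Quotient.inductionOn with
    | h g =>
      obtain ⟨s, ⟨hs, hgs⟩, -⟩ := hS.2 g g.2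
      exact ⟨⟨s, hs⟩, Quotient.sound (rightRel_subgroupOf_iff.2 hgs)⟩

lemma relIndex_ne_zero (hS : IsRightTransversal H K S) : K.relIndex H ≠ 0 := by
  rw [← hS.card_eq_relIndex, ← pos_iff_ne_zero, card_pos]
  obtain ⟨s, ⟨hs, -⟩, -⟩ := hS.2 1 H.one_mem
  exact ⟨s, hs⟩

lemma card_filter_mul_inv_mem (hT : IsRightTransversal H D T) (hDK : D ≤ K) (hKH : K ≤ H)
    {s : G} (hs : s ∈ H) : #(T.filter fun t => t * s⁻¹ ∈ K) = D.relIndex K := by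
  rw [← card_image_of_injective _ (mul_left_injective s⁻¹)]
  refine IsRightTransversal.card_eq_relIndex ⟨fun u hu => ?_, fun k hk => ?_⟩
  · obtain ⟨t, ht, rfl⟩ := mem_image.1 hu
    exact (mem_filter.1 ht).2
  · obtain ⟨t, ⟨ht, hkt⟩, huniq⟩ := hT.2 (k * s) (H.mul_mem (hKH hk) hs)
    refine ⟨t * s⁻¹, ⟨mem_image_of_mem _ (mem_filter.2 ⟨ht, ?_⟩), by simpa [mul_assoc] using hkt⟩,
      ?_⟩
    · simpa [mul_assoc] using K.mul_mem (K.inv_mem (hDK hkt)) hk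
    · rintro _ ⟨hu, hku⟩
      obtain ⟨t', ht', rfl⟩ := mem_image.1 hu
      rw [huniq t' ⟨(mem_filter.1 ht').1, by simpa [mul_assoc] using hku⟩]

/-- Double counting the pairs `(t, s)` with `t * s⁻¹ ∈ K`: each `t` sees exactly one `s`, and each
`s` sees `[K : D]` elements `t`. -/
lemma card_filter_eq_mul_relIndex (hT : IsRightTransversal H D T) (hS : IsRightTransversal H K S)
    (hDK : D ≤ K) (hKH : K ≤ H) {P : G → Prop} [DecidablePred P]
    (hP : ∀ κ ∈ K, ∀ a, P a → P (κ * a)) :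
    #(T.filter P) = #(S.filter P) * D.relIndex K := by
  rw [← mul_one #(T.filter P)]
  refine card_mul_eq_card_mul (fun t s => t * s⁻¹ ∈ K) (fun t ht => ?_) (fun s hs => ?_)
  · rw [mem_filter] at ht
    rw [bipartiteAbove, filter_filter, ← hS.card_filter_eq_one (hT.1 ht.1)]
    congr 1
    refine filter_congr fun s _ => ⟨fun h => h.2, fun h => ⟨?_, h⟩⟩
    exact (iff_of_mul_inv_mem hP h).1 ht.2
  · rw [mem_filter] at hs
    rw [bipartiteBelow, filter_filter, ← hT.card_filter_mul_inv_mem hDK hKH (hS.1 hs.1)]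
    congr 1
    refine filter_congr fun t _ => ⟨fun h => h.2, fun h => ⟨?_, h⟩⟩
    exact (iff_of_mul_inv_mem hP h).2 hs.2

variable {F : Type*} [Field F] [CharZero F]

lemma card_filter_div_card_eq_of_le (hT : IsRightTransversal H D T)
    (hS : IsRightTransversal H K S) (hDK : D ≤ K) (hKH : K ≤ H) {P : G → Prop} [DecidablePred P]
    (hP : ∀ κ ∈ K, ∀ a, P a → P (κ * a)) :
    (#(T.filter P) : F) / #T = #(S.filter P) / #S := by
  have hD : (D.relIndex K : F) ≠ 0 := Nat.cast_ne_zero.2 fun h =>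
    hT.relIndex_ne_zero (Subgroup.relIndex_eq_zero_of_le_right hKH h)
  have hcard : #T = #S * D.relIndex K := by
    simpa using hT.card_filter_eq_mul_relIndex hS hDK hKH (P := fun _ => True) (by simp)
  rw [hT.card_filter_eq_mul_relIndex hS hDK hKH hP, hcard, Nat.cast_mul, Nat.cast_mul,
    mul_div_mul_right _ _ hD]

lemma card_filter_div_card_eq {K₁ K₂ : Subgroup G} {S₁ S₂ : Finset G}
    (h₁ : IsRightTransversal H K₁ S₁) (h₂ : IsRightTransversal H K₂ S₂) (hK₁ : K₁ ≤ H)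
    (hK₂ : K₂ ≤ H) {P : G → Prop} [DecidablePred P]
    (hP₁ : ∀ κ ∈ K₁, ∀ a, P a → P (κ * a)) (hP₂ : ∀ κ ∈ K₂, ∀ a, P a → P (κ * a)) :
    (#(S₁.filter P) : F) / #S₁ = #(S₂.filter P) / #S₂ := by
  obtain ⟨T, hT⟩ := exists_isRightTransversal
    (Subgroup.relIndex_inf_ne_zero h₁.relIndex_ne_zero h₂.relIndex_ne_zero)
  rw [← hT.card_filter_div_card_eq_of_le h₁ inf_le_left hK₁ hP₁,
    hT.card_filter_div_card_eq_of_le h₂ inf_le_right hK₂ hP₂]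

end IsRightTransversal

end Transversals

section ScaledTranspose

variable {α R : Type*} [CommSemiring R]

lemma Module.End.finsupp_ext {A B : Module.End R (α →₀ R)}
    (h : ∀ p q, A (Finsupp.single q 1) p = B (Finsupp.single q 1) p) : A = B :=
  Finsupp.basisSingleOne.ext fun q => by simpa using Finsupp.ext fun p => h p q

lemma Module.End.mul_single_apply (A B : Module.End R (α →₀ R)) (p r : α) :
    (A * B) (Finsupp.single r 1) p
      = ∑ᶠ q, B (Finsupp.single r 1) q * A (Finsupp.single q 1) p := by
  set v := B (Finsupp.single r 1)
  have hv : A v = ∑ q ∈ v.support, v q • A (Finsupp.single q 1) := by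
    conv_lhs => rw [← v.sum_single]
    simp only [Finsupp.sum, map_sum, ← map_smul, Finsupp.smul_single_one]
  rw [Module.End.mul_apply, hv, Finsupp.finsetSum_apply, finsum_eq_sum_of_support_subset _
    fun q hq => Finsupp.mem_support_iff.2 (left_ne_zero_of_mul (Function.mem_support.1 hq))]
  rfl

def IsScaledTranspose (c : R) (A B : Module.End R (α →₀ R)) : Prop :=
  ∀ p q, A (Finsupp.single q 1) p = c * B (Finsupp.single p 1) q

namespace IsScaledTranspose

variable {a b c : R} {A A' B B' C : Module.End R (α →₀ R)}

lemma mul (hA : IsScaledTranspose a A A') (hB : IsScaledTranspose b B B') :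
    IsScaledTranspose (a * b) (A * B) (B' * A') := by
  intro p r
  rw [Module.End.mul_single_apply, Module.End.mul_single_apply,
    mul_finsum' _ _ ((A' (Finsupp.single p 1)).hasFiniteSupport.fun_mul_left _)]
  exact finsum_congr fun q => by rw [hA, hB]; ring

lemma eq (hA : IsScaledTranspose c A C) (hB : IsScaledTranspose c B C) : A = B :=
  Module.End.finsupp_ext fun p q => (hA p q).trans (hB p q).symm

end IsScaledTranspose

end ScaledTranspose

section Commensurable

open Subgroup

variable {G : Type*} [Group G]

lemma Subgroup.relIndex_comap_comap_of_surjective {G' : Type*} [Group G'] {f : G →* G'}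
    (hf : Function.Surjective f) (A B : Subgroup G') :
    (A.comap f).relIndex (B.comap f) = A.relIndex B := by
  rw [relIndex_comap, map_comap_eq_self_of_surjective hf]

/-- The generalized index `[A : B] = [A : A ∩ B] / [B : A ∩ B]` of commensurable subgroups. -/
noncomputable def Subgroup.commIndex (A B : Subgroup G) : ℚ :=
  B.relIndex A / A.relIndex B

lemma Subgroup.commIndex_eq_div {A B D : Subgroup G} (hD : D ≤ A ⊓ B)
    (hDA : D.relIndex A ≠ 0) : A.commIndex B = D.relIndex A / D.relIndex B := by
  have hd : (D.relIndex (A ⊓ B) : ℚ) ≠ 0 :=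
    Nat.cast_ne_zero.2 (mt (relIndex_eq_zero_of_le_right inf_le_left) hDA)
  rw [commIndex, ← relIndex_mul_relIndex D _ A hD inf_le_left,
    ← relIndex_mul_relIndex D _ B hD inf_le_right, inf_relIndex_left, inf_relIndex_right,
    Nat.cast_mul, Nat.cast_mul, mul_div_mul_left _ _ hd]

lemma Subgroup.Commensurable.commIndex_mul {A B C : Subgroup G} (hAB : Commensurable A B)
    (hBC : Commensurable B C) : A.commIndex B * B.commIndex C = A.commIndex C := by
  set D := A ⊓ B ⊓ C
  have hDA : D.relIndex A ≠ 0 := by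
    refine relIndex_inf_ne_zero ?_ (hAB.trans hBC).2
    rw [inf_relIndex_left]
    exact hAB.2
  have hDB : D.relIndex B ≠ 0 := by
    refine relIndex_inf_ne_zero ?_ hBC.2
    rw [inf_relIndex_right]
    exact hAB.1
  rw [commIndex_eq_div (le_inf (inf_le_left.trans inf_le_left) (inf_le_left.trans inf_le_right))
      hDA, commIndex_eq_div (le_inf (inf_le_left.trans inf_le_right) inf_le_right) hDB,
    commIndex_eq_div (le_inf (inf_le_left.trans inf_le_left) inf_le_right) hDA,
    div_mul_div_cancel₀ (Nat.cast_ne_zero.2 hDB)]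

lemma Subgroup.commIndex_comap_of_surjective {G' : Type*} [Group G'] {f : G →* G'}
    (hf : Function.Surjective f) (A B : Subgroup G') :
    (A.comap f).commIndex (B.comap f) = A.commIndex B := by
  rw [commIndex, commIndex, relIndex_comap_comap_of_surjective hf,
    relIndex_comap_comap_of_surjective hf]

lemma Subgroup.comap_conj_mul (H : Subgroup G) (x y : G) :
    H.comap (MulAut.conj (x * y)).toMonoidHom
      = (H.comap (MulAut.conj x).toMonoidHom).comap (MulAut.conj y).toMonoidHom := by
  ext g
  simp [mul_assoc]

lemma Subgroup.comap_conj_one (H : Subgroup G) :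
    H.comap (MulAut.conj (1 : G)).toMonoidHom = H := by
  ext g
  simp

lemma Subgroup.relIndex_comap_conj_inv (H : Subgroup G) (x : G) :
    (H.comap (MulAut.conj x⁻¹).toMonoidHom).relIndex H
      = H.relIndex (H.comap (MulAut.conj x).toMonoidHom) := by
  rw [← relIndex_comap_comap_of_surjective (f := (MulAut.conj x).toMonoidHom)
    (MulAut.conj x).surjective, ← comap_conj_mul, inv_mul_cancel, comap_conj_one]

/-- The modular function `Δ(x) = [x⁻¹Hx : H]` of the Hecke pair `(G, H)`. -/
noncomputable def heckeModular (H : Subgroup G) (x : G) : ℚ :=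
  (H.comap (MulAut.conj x).toMonoidHom).commIndex H

lemma heckeModular_mul {H : Subgroup G}
    (hH : ∀ z : G, Commensurable (H.comap (MulAut.conj z).toMonoidHom) H) (x y : G) :
    heckeModular H (x * y) = heckeModular H x * heckeModular H y := by
  have hxy : Commensurable
      ((H.comap (MulAut.conj x).toMonoidHom).comap (MulAut.conj y).toMonoidHom)
      (H.comap (MulAut.conj y).toMonoidHom) := by
    rw [← comap_conj_mul]
    exact (hH (x * y)).trans (hH y).symm
  rw [heckeModular, comap_conj_mul, ← hxy.commIndex_mul (hH y),
    commIndex_comap_of_surjective (MulAut.conj y).surjective]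
  rfl

end Commensurable

section Protonormal

open DoubleCoset Subgroup

variable {G : Type*} [Group G] {H K : Subgroup G}

lemma Subgroup.coe_sup_of_mul_comm (hHK : (K : Set G) * H = H * K) :
    ((H ⊔ K : Subgroup G) : Set G) = H * K := by
  have hmul : ((H : Set G) * K) * (H * K) = H * K := by
    calc ((H : Set G) * K) * (H * K) = H * (K * H) * K := by simp only [mul_assoc]
      _ = (H * H) * (K * K) := by rw [hHK]; simp only [mul_assoc]
      _ = H * K := by rw [coe_mul_coe, coe_mul_coe]
  let L : Subgroup G :=
    { carrier := H * K
      one_mem' := ⟨1, H.one_mem, 1, K.one_mem, mul_one 1⟩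
      mul_mem' := fun ha hb => hmul ▸ Set.mul_mem_mul ha hb
      inv_mem' := fun {a} ha => by
        rw [← hHK, ← inv_coe_set (H := K), ← inv_coe_set (H := H), ← mul_inv_rev]
        exact Set.inv_mem_inv.2 ha }
  refine subset_antisymm (sup_le (fun h hh => ?_) (fun k hk => ?_) : H ⊔ K ≤ L) ?_
  · exact ⟨h, hh, 1, K.one_mem, mul_one h⟩
  · exact ⟨1, H.one_mem, k, hk, one_mul k⟩
  · rintro _ ⟨h, hh, k, hk, rfl⟩
    exact mul_mem_sup hh hk

lemma image_conj_eq_comap (H : Subgroup G) (x : G) :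
    (fun g => x⁻¹ * g * x) '' (H : Set G) = H.comap (MulAut.conj x).toMonoidHom := by
  ext g
  refine ⟨?_, fun hg => ⟨x * g * x⁻¹, hg, by group⟩⟩
  rintro ⟨h, hh, rfl⟩
  simpa [mul_assoc] using hh

lemma mem_doubleCoset_inv_iff_mul_mem_sup {x u : G}
    (hx : (H.comap (MulAut.conj x).toMonoidHom : Set G) * H
      = H * H.comap (MulAut.conj x).toMonoidHom) :
    u ∈ doubleCoset x⁻¹ H H ↔ u * x ∈ H ⊔ H.comap (MulAut.conj x).toMonoidHom := by
  rw [← SetLike.mem_coe, coe_sup_of_mul_comm hx, mem_doubleCoset, Set.mem_mul]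
  constructor
  · rintro ⟨a, ha, b, hb, rfl⟩
    exact ⟨a, ha, x⁻¹ * b * x, by simpa [mul_assoc] using hb, by group⟩
  · rintro ⟨a, ha, c, hc, hu⟩
    exact ⟨a, ha, x * c * x⁻¹, hc, by rw [← mul_inv_eq_iff_eq_mul.2 hu.symm]; group⟩

lemma inv_mem_doubleCoset_inv {x u : G} :
    u⁻¹ ∈ doubleCoset x⁻¹ H H ↔ u ∈ doubleCoset x H H := by
  suffices ∀ {x u : G}, u ∈ doubleCoset x H H → u⁻¹ ∈ doubleCoset x⁻¹ H H from
    ⟨fun h => by simpa using this h, this⟩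
  intro x u hu
  obtain ⟨a, ha, b, hb, rfl⟩ := mem_doubleCoset.1 hu
  exact mem_doubleCoset.2 ⟨b⁻¹, H.inv_mem hb, a⁻¹, H.inv_mem ha, by group⟩

end Protonormal

section HeckeOperators

open Finset DoubleCoset Subgroup

variable {G : Type*} [Group G] {H : Subgroup G} {F : Type*} [Field F]

lemma deltaH_apply_mk (t w : G) :
    deltaH H F t (Quotient.mk _ w) = if w * t⁻¹ ∈ H then 1 else 0 := by
  rw [deltaH, Finsupp.single_apply]
  exact if_congr (Quotient.eq.trans QuotientGroup.rightRel_apply) rfl rfl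

lemma HeckeModule.end_ext {A B : Module.End F (HeckeModule H F)}
    (h : ∀ t w : G, A (deltaH H F t) (Quotient.mk _ w) = B (deltaH H F t) (Quotient.mk _ w)) :
    A = B :=
  Module.End.finsupp_ext fun p q => by
    induction p, q using Quotient.inductionOn₂ with
    | h w t => exact h t w

variable {x : G} {T : Module.End F (HeckeModule H F)}

lemma IsSigma.exists_isRightTransversal (hT : IsSigma H F x T) :
    ∃ S, IsRightTransversal H (H ⊓ H.comap (MulAut.conj x).toMonoidHom) S ∧
      ∀ t, T (deltaH H F t) = (#S : F)⁻¹ • ∑ h ∈ S, deltaH H F (x * h * t) := by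
  obtain ⟨S, hSH, hS, hTS⟩ := hT
  exact ⟨S, ⟨hSH, hS⟩, hTS⟩

lemma IsSigma.relIndex_ne_zero (hT : IsSigma H F x T) :
    (H.comap (MulAut.conj x).toMonoidHom).relIndex H ≠ 0 := by
  obtain ⟨S, hS, -⟩ := hT.exists_isRightTransversal
  simpa only [inf_relIndex_left] using hS.relIndex_ne_zero

lemma IsSigma.apply_deltaH_apply (hT : IsSigma H F x T) (t w : G) :
    T (deltaH H F t) (Quotient.mk _ w)
      = ((H.comap (MulAut.conj x).toMonoidHom).relIndex H : F)⁻¹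
        * if w * t⁻¹ ∈ doubleCoset x H H then 1 else 0 := by
  obtain ⟨S, hS, hTS⟩ := hT.exists_isRightTransversal
  simp only [hTS, Finsupp.smul_apply, Finsupp.finsetSum_apply, deltaH_apply_mk, sum_boole,
    smul_eq_mul, hS.card_eq_relIndex, inf_relIndex_left]
  congr 1
  split_ifs with hw
  · obtain ⟨a, ha, b, hb, hab⟩ := mem_doubleCoset.1 hw
    suffices #(S.filter fun h => w * (x * h * t)⁻¹ ∈ H) = 1 by rw [this, Nat.cast_one]
    rw [← hS.card_filter_eq_one hb]
    refine congrArg _ (filter_congr fun h hh => ?_)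
    have : w * (x * h * t)⁻¹ = a * (x * (b * h⁻¹) * x⁻¹) := by
      rw [← mul_inv_eq_iff_eq_mul.2 hab.symm]; group
    rw [this, mul_mem_cancel_left ha, Subgroup.mem_inf,
      and_iff_right (H.mul_mem hb (H.inv_mem (hS.1 hh)))]
    rfl
  · suffices S.filter (fun h => w * (x * h * t)⁻¹ ∈ H) = ∅ by
      rw [this, card_empty, Nat.cast_zero]
    exact filter_false_of_mem fun h hh hwh =>
      hw (mem_doubleCoset.2 ⟨_, hwh, h, hS.1 hh, by group⟩)

lemma IsSigma.eq_one (hT : IsSigma H F 1 T) : T = 1 := by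
  refine HeckeModule.end_ext fun t w => ?_
  have hH : doubleCoset (1 : G) H H = H := by
    rw [doubleCoset, Set.singleton_one, mul_one, coe_mul_coe]
  rw [hT.apply_deltaH_apply, Module.End.one_apply, deltaH_apply_mk, comap_conj_one,
    relIndex_self, Nat.cast_one, inv_one, one_mul, hH, SetLike.mem_coe]

variable [CharZero F] {Tinv : Module.End F (HeckeModule H F)}

lemma IsSigma.isScaledTranspose (hT : IsSigma H F x T) (hTinv : IsSigma H F x⁻¹ Tinv) :
    IsScaledTranspose (heckeModular H x : F) T Tinv := by
  intro p q
  induction p, q using Quotient.inductionOn₂ with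
  | h w t =>
    have hinv : (H.comap (MulAut.conj x⁻¹).toMonoidHom).relIndex H ≠ 0 :=
      hTinv.relIndex_ne_zero
    rw [heckeModular, commIndex, ← relIndex_comap_conj_inv]
    change T (deltaH H F t) _ = _ * Tinv (deltaH H F w) _
    rw [hT.apply_deltaH_apply, hTinv.apply_deltaH_apply, ← inv_mem_doubleCoset_inv, mul_inv_rev,
      inv_inv]
    push_cast
    field_simp

lemma IsSigma.inv_mul_apply_deltaH_apply
    (hx : (H.comap (MulAut.conj x).toMonoidHom : Set G) * H
      = H * H.comap (MulAut.conj x).toMonoidHom)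
    (hTinv : IsSigma H F x⁻¹ Tinv) (hT : IsSigma H F x T) (t w : G) :
    (Tinv * T) (deltaH H F t) (Quotient.mk _ w)
      = ((H.comap (MulAut.conj x⁻¹).toMonoidHom).relIndex H : F)⁻¹
        * if w * t⁻¹ ∈ H ⊔ H.comap (MulAut.conj x).toMonoidHom then 1 else 0 := by
  obtain ⟨S, hS, hTS⟩ := hT.exists_isRightTransversal
  have hS0 : (#S : F) ≠ 0 := Nat.cast_ne_zero.2 (hS.card_eq_relIndex ▸ hS.relIndex_ne_zero)
  have hterm : ∀ h ∈ S, Tinv (deltaH H F (x * h * t)) (Quotient.mk _ w)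
      = ((H.comap (MulAut.conj x⁻¹).toMonoidHom).relIndex H : F)⁻¹
        * if w * t⁻¹ ∈ H ⊔ H.comap (MulAut.conj x).toMonoidHom then 1 else 0 := by
    intro h hh
    rw [hTinv.apply_deltaH_apply, mem_doubleCoset_inv_iff_mul_mem_sup hx]
    have : w * (x * h * t)⁻¹ * x = w * t⁻¹ * h⁻¹ := by group
    rw [this, mul_mem_cancel_right (inv_mem (mem_sup_left (hS.1 hh)))]
  rw [Module.End.mul_apply, hTS, map_smul, map_sum, Finsupp.smul_apply, Finsupp.finsetSum_apply,
    sum_congr rfl hterm, sum_const, nsmul_eq_mul, smul_eq_mul, inv_mul_cancel_left₀ hS0]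

lemma IsSigma.inv_mul_mul_eq {y : G}
    (hx : (H.comap (MulAut.conj x).toMonoidHom : Set G) * H
      = H * H.comap (MulAut.conj x).toMonoidHom)
    {Ty Txy : Module.End F (HeckeModule H F)} (hTinv : IsSigma H F x⁻¹ Tinv)
    (hT : IsSigma H F x T) (hTy : IsSigma H F y Ty) (hTxy : IsSigma H F (x * y) Txy) :
    Tinv * T * Ty = Tinv * Txy := by
  obtain ⟨Sy, hSy, hTSy⟩ := hTy.exists_isRightTransversal
  obtain ⟨Sxy, hSxy, hTSxy⟩ := hTxy.exists_isRightTransversal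
  refine HeckeModule.end_ext fun t w => ?_
  set L := H ⊔ H.comap (MulAut.conj x).toMonoidHom
  have hP (κ : G) (hκ : y * κ⁻¹ * y⁻¹ ∈ L) (k : G) (hk : w * (y * k * t)⁻¹ ∈ L) :
      w * (y * (κ * k) * t)⁻¹ ∈ L := by
    have : w * (y * (κ * k) * t)⁻¹ = w * (y * k * t)⁻¹ * (y * κ⁻¹ * y⁻¹) := by group
    exact this ▸ L.mul_mem hk hκ
  have hPy (κ : G) (hκ : κ ∈ H ⊓ H.comap (MulAut.conj y).toMonoidHom) :=
    hP κ (mem_sup_left (by simpa [mul_assoc] using H.inv_mem hκ.2))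
  have hPxy (κ : G) (hκ : κ ∈ H ⊓ H.comap (MulAut.conj (x * y)).toMonoidHom) :=
    hP κ (mem_sup_right (by simpa [mul_assoc] using H.inv_mem hκ.2))
  have lhs : (Tinv * T * Ty) (deltaH H F t) (Quotient.mk _ w)
      = ((H.comap (MulAut.conj x⁻¹).toMonoidHom).relIndex H : F)⁻¹
        * (#(Sy.filter fun k => w * (y * k * t)⁻¹ ∈ L) / #Sy) := by
    rw [Module.End.mul_apply, hTSy, map_smul, map_sum, Finsupp.smul_apply,
      Finsupp.finsetSum_apply]
    simp_rw [hTinv.inv_mul_apply_deltaH_apply hx hT, ← mul_sum, sum_boole, smul_eq_mul]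
    ring
  have rhs : (Tinv * Txy) (deltaH H F t) (Quotient.mk _ w)
      = ((H.comap (MulAut.conj x⁻¹).toMonoidHom).relIndex H : F)⁻¹
        * (#(Sxy.filter fun k => w * (y * k * t)⁻¹ ∈ L) / #Sxy) := by
    rw [Module.End.mul_apply, hTSxy, map_smul, map_sum, Finsupp.smul_apply,
      Finsupp.finsetSum_apply]
    simp_rw [hTinv.apply_deltaH_apply, mem_doubleCoset_inv_iff_mul_mem_sup hx,
      ← mul_sum, sum_boole, smul_eq_mul]
    have (m : G) : w * (x * y * m * t)⁻¹ * x = w * (y * m * t)⁻¹ := by group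
    simp_rw [this]
    ring
  rw [lhs, rhs, hSy.card_filter_div_card_eq hSxy inf_le_left inf_le_left hPy hPxy]

end HeckeOperators

theorem stmt15_general {G : Type*} [Group G] (H : Subgroup G) (F : Type*) [Field F] [CharZero F]
    (hproto : ∀ x : G,
      ((fun g => x⁻¹ * g * x) '' (H : Set G)) * (H : Set G)
        = (H : Set G) * ((fun g => x⁻¹ * g * x) '' (H : Set G)))
    (σ : G → Module.End F (HeckeModule H F))
    (hσ : ∀ x : G, IsSigma H F x (σ x)) :
    σ 1 = 1 ∧
    (∀ x y : G, σ x⁻¹ * σ x * σ y = σ x⁻¹ * σ (x * y)) ∧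
    (∀ x y : G, σ x * σ y * σ y⁻¹ = σ (x * y) * σ y⁻¹) := by
  simp only [image_conj_eq_comap] at hproto
  have two (x y : G) : σ x⁻¹ * σ x * σ y = σ x⁻¹ * σ (x * y) :=
    (hσ x⁻¹).inv_mul_mul_eq (hproto x) (hσ x) (hσ y) (hσ (x * y))
  refine ⟨(hσ 1).eq_one, two, fun x y => ?_⟩
  have hT (z : G) := (hσ z).isScaledTranspose (hσ z⁻¹)
  have hcomm (z : G) : (H.comap (MulAut.conj z).toMonoidHom).Commensurable H :=
    ⟨(hσ z).relIndex_ne_zero, H.relIndex_comap_conj_inv z ▸ (hσ z⁻¹).relIndex_ne_zero⟩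
  have lhs := ((hT x).mul (hT y)).mul (hT y⁻¹)
  rw [← mul_assoc, two, inv_inv, ← mul_inv_rev] at lhs
  have rhs := (hT (x * y)).mul (hT y⁻¹)
  rw [inv_inv, heckeModular_mul hcomm] at rhs
  simp only [Rat.cast_mul] at rhs
  exact lhs.eq rhs

/-- If `(G, H)` is a Hecke pair with `H` protonormal in `G`, then `x ↦ σ_x` is a
partial representation of `G` in the Hecke algebra: `σ_1 = 1`,
`σ_{x⁻¹} σ_x σ_y = σ_{x⁻¹} σ_{xy}`, and `σ_x σ_y σ_{y⁻¹} = σ_{xy} σ_{y⁻¹}`. -/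
theorem stmt15 {G : Type*} [Group G] (H : Subgroup G) (F : Type*) [Field F] [CharZero F]
    (hH : IsHeckePair H)
    (hproto : ∀ x : G,
      ((fun g => x⁻¹ * g * x) '' (H : Set G)) * (H : Set G)
        = (H : Set G) * ((fun g => x⁻¹ * g * x) '' (H : Set G)))
    (σ : G → Module.End F (HeckeModule H F))
    (hσ : ∀ x : G, IsSigma H F x (σ x)) :
    σ 1 = 1 ∧
    (∀ x y : G, σ x⁻¹ * σ x * σ y = σ x⁻¹ * σ (x * y)) ∧
    (∀ x y : G, σ x * σ y * σ y⁻¹ = σ (x * y) * σ y⁻¹) :=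
  stmt15_general H F hproto σ hσ
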